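/- Let T be a directed tree such that the set Chi(u) of children of u is countably infinite for every u ∈ V. Then there exists a family λ = {λ_v}_{v∈V°} of nonzero complex numbers such that the weighted shift S_λ is injective and hyponormal and D(S_λ²) = {0}. -/

import Mathlib

open scoped ENNReal NNReal Classical

noncomputable section

/-- A directed tree: a directed graph with nonempty vertex set in which each vertex has
at most one parent, there are no circuits, and the underlying undirected graph is
connected and has no cycles (i.e. is a tree). -/
structure DirectedTree (V : Type) where
  edge : V → V → Prop
  nonempty : Nonempty V
  antisymm : ∀ u v : V, edge u v → ¬ edge v u
  parent_unique : ∀ u v w : V, edge u w → edge v w → u = v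
  isTree : (SimpleGraph.fromRel edge).IsTree

namespace DirectedTree

variable {V : Type} (T : DirectedTree V)

/-- The set of children of a vertex. -/
def chi (u : V) : Set V := {v | T.edge u v}

/-- `v` has a parent. -/
def HasParent (v : V) : Prop := ∃ u, T.edge u v

/-- `V⁰`: the set of non-root vertices, i.e. the vertices possessing a parent. -/
def Vcirc : Set V := {v | T.HasParent v}

/-- The tree is leafless if every vertex has a child. -/
def Leafless : Prop := ∀ u : V, (T.chi u).Nonempty

/-- The parent of a vertex (junk value if the vertex is a root). -/
def par (v : V) : V := if h : T.HasParent v then h.choose else T.nonempty.some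

/-- The set of descendants of a vertex. -/
def desc (u : V) : Set V := {w | Relation.ReflTransGen T.edge u w}

/-- The formal weighted shift map `Λ_T` acting on all complex functions on `V`. -/
def Lam (lam : V → ℂ) (f : V → ℂ) : V → ℂ :=
  fun v => if T.HasParent v then lam v * f (T.par v) else 0

/-- The domain of the weighted shift `S_λ`. -/
def domain (lam : V → ℂ) : Set (lp (fun _ : V => ℂ) 2) :=
  {f | Memℓp (T.Lam lam ⇑f) 2}

/-- The weighted shift `S_λ` (extended by `0` outside its domain). -/
def shift (lam : V → ℂ) (f : lp (fun _ : V => ℂ) 2) : lp (fun _ : V => ℂ) 2 :=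
  if h : f ∈ T.domain lam then (⟨T.Lam lam ⇑f, h⟩ : lp (fun _ : V => ℂ) 2) else 0

/-- The domain of `S_λ²`. -/
def squareDomain (lam : V → ℂ) : Set (lp (fun _ : V => ℂ) 2) :=
  {f | f ∈ T.domain lam ∧ T.shift lam f ∈ T.domain lam}

/-- The domain of the adjoint `S_λ*`. -/
def adjDomain (lam : V → ℂ) : Set (lp (fun _ : V => ℂ) 2) :=
  {g | ∃ h : lp (fun _ : V => ℂ) 2,
    ∀ f ∈ T.domain lam, (inner ℂ (T.shift lam f) g : ℂ) = inner ℂ f h}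

/-- `S_λ` is hyponormal: it is densely defined, `D(S_λ) ⊆ D(S_λ*)` and
`‖S_λ* f‖ ≤ ‖S_λ f‖` for every `f ∈ D(S_λ)` (the adjoint value at `f` being any vector
`h` satisfying `⟪S_λ g, f⟫ = ⟪g, h⟫` for all `g ∈ D(S_λ)`; it is unique by density). -/
def IsHyponormal (lam : V → ℂ) : Prop :=
  Dense (T.domain lam) ∧ T.domain lam ⊆ T.adjDomain lam ∧
    ∀ f ∈ T.domain lam, ∀ h : lp (fun _ : V => ℂ) 2,
      (∀ g ∈ T.domain lam, (inner ℂ (T.shift lam g) f : ℂ) = inner ℂ g h) →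
        ‖h‖ ≤ ‖T.shift lam f‖

/-- `ζ_u = (Σ_{v ∈ Chi(u)} |λ_v|²)^{1/2} ∈ [0,∞]`. -/
def zeta (lam : V → ℂ) (u : V) : ℝ≥0∞ :=
  (∑' v : T.chi u, ((‖lam (v : V)‖₊ : ℝ≥0∞)) ^ 2) ^ (1/2 : ℝ)

end DirectedTree

/-!
Enumerate the children of every vertex as `n : Chi(u) ≃ ℕ` and choose an integer potential `P`
on the tree with `P v = P u + n v + 1` along every edge `u → v`; it exists because the underlying
graph is a tree. For `λ_v = 2^(P v / 2) 2^-(n v + 1)` one gets `ζ_u² = 2^(P u)`, so that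
`‖S_λ f‖² = ∑ 2^(P u) |f u|²`. Finitely supported vectors then lie in `D(S_λ)`, and for
`v ∈ Chi(u)` we have `|λ_v|² / ζ_v² = 4^-(n v + 1)`, whose sum is at most `1`; by Cauchy–Schwarz
the formal adjoint `(S_λ* g)(u) = ∑_{v ∈ Chi(u)} conj λ_v g(v)` then satisfies
`‖S_λ* g‖ ≤ ‖S_λ g‖`. Finally `|λ_v|² ζ_v² = 4^(P u)` does not depend on `v ∈ Chi(u)`, so the
series `∑_{v ∈ Chi(u)} |λ_v|² ζ_v²` diverges and `S_λ f ∈ D(S_λ)` forces `f = 0`.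
-/

namespace SimpleGraph

variable {V A : Type*} [AddCommGroup A] {G : SimpleGraph V}

def Walk.sumAlong (φ : V → V → A) {a b : V} (p : G.Walk a b) : A :=
  (p.darts.map fun d => φ d.fst d.snd).sum

theorem IsTree.exists_potential (hG : G.IsTree) (φ : V → V → A)
    (hφ : ∀ a b, G.Adj a b → φ b a = -φ a b) :
    ∃ P : V → A, ∀ a b, G.Adj a b → P b = P a + φ a b := by
  let r := hG.connected.nonempty.some
  refine ⟨fun u => (hG.existsUnique_path r u).choose.sumAlong φ, fun a b hab => ?_⟩
  have hpath : ∀ {u : V} (p : G.Walk r u), p.IsPath →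
      (hG.existsUnique_path r u).choose.sumAlong φ = p.sumAlong φ :=
    fun p hp => by rw [(hG.existsUnique_path r _).choose_spec.2 p hp]
  obtain ⟨p, hp, -⟩ := hG.existsUnique_path r a
  simp only [hpath p hp]
  -- Either the path from `r` to `a` ends with the edge `b a`, or appending `a b` to it gives
  -- the path from `r` to `b`.
  by_cases hb : b ∈ p.support
  · have hlast : p.dropUntil b hb = .cons hab.symm .nil :=
      (hG.existsUnique_path b a).unique (hp.dropUntil hb) (by simp [Walk.isPath_def, hab.ne'])
    have hsplit := congrArg (Walk.sumAlong φ) (p.take_spec hb)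
    rw [hpath _ (hp.takeUntil hb), ← hsplit, hlast]
    simp [Walk.sumAlong, hφ a b hab]
  · rw [hpath _ (hp.concat hb hab)]
    simp [Walk.sumAlong, Walk.darts_concat]

end SimpleGraph

section LpTwo

variable {α : Type*} {E : α → Type*} [∀ i, NormedAddCommGroup (E i)]

theorem summable_norm_sq_iff_tsum_enorm_sq_ne_top {f : ∀ i, E i} :
    Summable (fun i => ‖f i‖ ^ 2) ↔ ∑' i, ‖f i‖ₑ ^ 2 ≠ ⊤ := by
  simp only [enorm_eq_nnnorm, ← ENNReal.coe_pow, ENNReal.tsum_coe_ne_top_iff_summable,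
    ← NNReal.summable_coe, NNReal.coe_pow, coe_nnnorm]

theorem memℓp_two_iff_tsum_enorm_sq_ne_top {f : ∀ i, E i} :
    Memℓp f 2 ↔ ∑' i, ‖f i‖ₑ ^ 2 ≠ ⊤ := by
  rw [memℓp_gen_iff (by norm_num), ← summable_norm_sq_iff_tsum_enorm_sq_ne_top]
  simp

theorem lp.enorm_sq_eq_tsum (f : lp E 2) : ‖f‖ₑ ^ 2 = ∑' i, ‖f i‖ₑ ^ 2 := by
  have hf := lp.norm_rpow_eq_tsum (p := 2) (by norm_num) f
  simp only [ENNReal.toReal_ofNat, Real.rpow_two] at hf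
  have hs : Summable (fun i => ‖f i‖ ^ 2) :=
    summable_norm_sq_iff_tsum_enorm_sq_ne_top.2 (memℓp_two_iff_tsum_enorm_sq_ne_top.1 f.2)
  simp only [← ofReal_norm, ← ENNReal.ofReal_pow (norm_nonneg _), hf,
    ENNReal.ofReal_tsum_of_nonneg (fun _ => by positivity) hs]

end LpTwo

theorem ENNReal.tsum_coe_sq_le_tsum_mul_tsum_of_sq_le_mul {ι : Type*} {r f g : ι → ℝ≥0}
    (h : ∀ i, r i ^ 2 ≤ f i * g i) :
    (∑' i, (r i : ℝ≥0∞)) ^ 2 ≤ (∑' i, (f i : ℝ≥0∞)) * ∑' i, (g i : ℝ≥0∞) := by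
  rw [ENNReal.tsum_eq_iSup_sum, ENNReal.iSup_pow]
  refine iSup_le fun s => ?_
  calc (∑ i ∈ s, (r i : ℝ≥0∞)) ^ 2 ≤ (∑ i ∈ s, (f i : ℝ≥0∞)) * ∑ i ∈ s, (g i : ℝ≥0∞) := by
        exact_mod_cast Finset.sum_sq_le_sum_mul_sum_of_sq_le_mul s (fun _ _ => zero_le)
          (fun _ _ => zero_le) fun i _ => h i
    _ ≤ _ := by gcongr <;> exact ENNReal.sum_le_tsum s

theorem ENNReal.tsum_inv_two_pow_succ : ∑' k : ℕ, (2⁻¹ : ℝ≥0∞) ^ (k + 1) = 1 := by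
  rw [ENNReal.tsum_geometric_add_one, ENNReal.one_sub_inv_two, inv_inv,
    ENNReal.inv_mul_cancel two_ne_zero ENNReal.ofNat_ne_top]

namespace DirectedTree

variable {V : Type} (T : DirectedTree V)

theorem edge_par {v : V} (hv : T.HasParent v) : T.edge (T.par v) v := by
  rw [par, dif_pos hv]
  exact hv.choose_spec

theorem par_eq_of_edge {u v : V} (h : T.edge u v) : T.par v = u :=
  T.parent_unique _ _ _ (T.edge_par ⟨u, h⟩) h

def sigmaChiEquiv : (Σ u : V, T.chi u) ≃ T.Vcirc where
  toFun p := ⟨p.2, p.1, p.2.2⟩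
  invFun v := ⟨T.par v, v, T.edge_par v.2⟩
  left_inv := by
    rintro ⟨u, v, hv⟩
    exact Sigma.subtype_ext (T.par_eq_of_edge hv) rfl
  right_inv _ := rfl

theorem tsum_eq_tsum_sigma_chi {α : Type*} [AddCommMonoid α] [TopologicalSpace α] (φ : V → α)
    (hφ : ∀ v, ¬T.HasParent v → φ v = 0) :
    ∑' v, φ v = ∑' p : Σ u : V, T.chi u, φ p.2 := by
  rw [← tsum_subtype_eq_of_support_subset (s := T.Vcirc) fun v hv => not_not.1 (mt (hφ v) hv),
    ← T.sigmaChiEquiv.tsum_eq]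
  rfl

theorem tsum_eq_tsum_tsum_chi (φ : V → ℝ≥0∞) (hφ : ∀ v, ¬T.HasParent v → φ v = 0) :
    ∑' v, φ v = ∑' u, ∑' v : T.chi u, φ v := by
  rw [T.tsum_eq_tsum_sigma_chi φ hφ, ENNReal.tsum_sigma']

theorem tsum_eq_tsum_tsum_chi_of_summable {E : Type*} [NormedAddCommGroup E] [CompleteSpace E]
    {φ : V → E} (hφ : ∀ v, ¬T.HasParent v → φ v = 0) (hs : Summable φ) :
    ∑' v, φ v = ∑' u, ∑' v : T.chi u, φ v := by
  rw [T.tsum_eq_tsum_sigma_chi φ hφ]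
  refine Summable.tsum_sigma ?_
  exact (T.sigmaChiEquiv.summable_iff (f := fun v : T.Vcirc => φ v)).2 (hs.subtype _)

theorem tsum_tsum_chi_le (φ : V → ℝ≥0∞) : ∑' u, ∑' v : T.chi u, φ v ≤ ∑' v, φ v :=
  calc ∑' u, ∑' v : T.chi u, φ v = ∑' v : T.Vcirc, φ v :=
        (ENNReal.tsum_sigma' fun p : Σ u, T.chi u => φ p.2).symm.trans
          (T.sigmaChiEquiv.tsum_eq fun v : T.Vcirc => φ v)
    _ ≤ ∑' v, φ v := ENNReal.tsum_comp_le_tsum_of_injective Subtype.val_injective φ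

theorem exists_potential {A : Type*} [AddCommGroup A] (w : V → A) :
    ∃ P : V → A, ∀ u v, T.edge u v → P v = P u + w v := by
  let φ : V → V → A := fun a b => if T.edge a b then w b else if T.edge b a then -w a else 0
  obtain ⟨P, hP⟩ := T.isTree.exists_potential φ fun a b hab => by
    rcases (SimpleGraph.fromRel_adj _ _ _).1 hab |>.2 with h | h <;>
      simp [φ, h, T.antisymm _ _ h]
  refine ⟨P, fun u v h => ?_⟩
  rw [hP u v ((SimpleGraph.fromRel_adj _ _ _).2 ⟨fun e => T.antisymm _ _ h (e ▸ h), Or.inl h⟩)]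
  simp [φ, h]

theorem exists_bijective_index (h : ∀ u : V, (T.chi u).Countable ∧ (T.chi u).Infinite) :
    ∃ n : V → ℕ, ∀ u, Function.Bijective fun v : T.chi u => n v := by
  have e : ∀ u, T.chi u ≃ ℕ := fun u =>
    have := (h u).1.to_subtype
    have := (h u).2.to_subtype
    (nonempty_denumerable (T.chi u)).some.eqv
  let n : V → ℕ := fun v => if hv : T.HasParent v then e (T.par v) ⟨v, T.edge_par hv⟩ else 0
  have hn : ∀ u (v : T.chi u), n v = e u v := by
    rintro u ⟨v, hv⟩
    obtain rfl := T.par_eq_of_edge hv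
    simp [n, show T.HasParent v from ⟨_, hv⟩]
  exact ⟨n, fun u => by simpa only [hn] using (e u).bijective⟩

variable (lam : V → ℂ)

theorem zeta_sq (u : V) : T.zeta lam u ^ 2 = ∑' v : T.chi u, ‖lam v‖ₑ ^ 2 := by
  simpa [zeta, enorm_eq_nnnorm] using
    ENNReal.rpow_inv_natCast_pow two_ne_zero (∑' v : T.chi u, ‖lam v‖ₑ ^ 2)

theorem Lam_apply_of_edge {f : V → ℂ} {u v : V} (h : T.edge u v) :
    T.Lam lam f v = lam v * f u := by
  rw [Lam, if_pos ⟨u, h⟩, T.par_eq_of_edge h]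

theorem Lam_apply_of_not_hasParent {f : V → ℂ} {v : V} (hv : ¬T.HasParent v) :
    T.Lam lam f v = 0 :=
  if_neg hv

theorem tsum_mul_enorm_Lam_sq (w : V → ℝ≥0∞) (f : V → ℂ) :
    ∑' v, w v * ‖T.Lam lam f v‖ₑ ^ 2 =
      ∑' u, (∑' v : T.chi u, w v * ‖lam v‖ₑ ^ 2) * ‖f u‖ₑ ^ 2 := by
  rw [T.tsum_eq_tsum_tsum_chi _ fun v hv => by simp [T.Lam_apply_of_not_hasParent lam hv]]
  refine tsum_congr fun u => ?_
  rw [← ENNReal.tsum_mul_right]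
  refine tsum_congr fun v => ?_
  rw [T.Lam_apply_of_edge lam v.2, enorm_mul, mul_pow, mul_assoc]

theorem mem_domain_iff {f : lp (fun _ : V => ℂ) 2} :
    f ∈ T.domain lam ↔ ∑' u, T.zeta lam u ^ 2 * ‖f u‖ₑ ^ 2 ≠ ⊤ := by
  have := T.tsum_mul_enorm_Lam_sq lam 1 f
  simp only [Pi.one_apply, one_mul] at this
  rw [domain, Set.mem_ofPred_eq, memℓp_two_iff_tsum_enorm_sq_ne_top, this]
  simp only [zeta_sq]

theorem coe_shift {f : lp (fun _ : V => ℂ) 2} (hf : f ∈ T.domain lam) :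
    ⇑(T.shift lam f) = T.Lam lam f := by
  rw [shift, dif_pos hf]

theorem enorm_shift_sq {f : lp (fun _ : V => ℂ) 2} (hf : f ∈ T.domain lam) :
    ‖T.shift lam f‖ₑ ^ 2 = ∑' u, T.zeta lam u ^ 2 * ‖f u‖ₑ ^ 2 := by
  simpa [lp.enorm_sq_eq_tsum, T.coe_shift lam hf, zeta_sq] using T.tsum_mul_enorm_Lam_sq lam 1 f

theorem zero_mem_domain : 0 ∈ T.domain lam := by
  simp [mem_domain_iff]

theorem shift_zero : T.shift lam 0 = 0 :=
  lp.ext <| (T.coe_shift lam (T.zero_mem_domain lam)).trans <| funext fun v => by simp [Lam]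

theorem injOn_shift (hT : T.Leafless) (hlam : ∀ v ∈ T.Vcirc, lam v ≠ 0) :
    Set.InjOn (T.shift lam) (T.domain lam) := by
  intro f hf g hg hfg
  refine lp.ext <| funext fun u => ?_
  obtain ⟨v, hv⟩ := hT u
  have hfgv := congrFun (congrArg (⇑) hfg) v
  rw [T.coe_shift lam hf, T.coe_shift lam hg, T.Lam_apply_of_edge lam hv,
    T.Lam_apply_of_edge lam hv] at hfgv
  exact mul_left_cancel₀ (hlam v ⟨u, hv⟩) hfgv

theorem dense_domain (hfin : ∀ u, T.zeta lam u ≠ ⊤) : Dense (T.domain lam) := by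
  have hfinsupp : ∀ (f : lp (fun _ : V => ℂ) 2) (s : Finset V), (∀ u ∉ s, f u = 0) →
      f ∈ T.domain lam := fun f s hs => by
    rw [mem_domain_iff, tsum_eq_sum (s := s) fun u hu => by simp [hs u hu]]
    exact ENNReal.sum_ne_top.2 fun u _ =>
      ENNReal.mul_ne_top (ENNReal.pow_ne_top (hfin u)) (ENNReal.pow_ne_top enorm_ne_top)
  intro f
  refine mem_closure_of_tendsto (lp.hasSum_single (by norm_num) f) (.of_forall fun s => ?_)
  refine hfinsupp _ s fun u hu => ?_
  rw [lp.coeFn_sum, Finset.sum_apply]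
  exact Finset.sum_eq_zero fun i hi => lp.single_apply_ne 2 i _ (ne_of_mem_of_not_mem hi hu).symm

theorem squareDomain_eq_singleton_zero
    (hinf : ∀ u, ∑' v : T.chi u, T.zeta lam v ^ 2 * ‖lam v‖ₑ ^ 2 = ⊤) :
    T.squareDomain lam = {0} := by
  ext f
  refine ⟨fun ⟨hf, hSf⟩ => ?_, ?_⟩
  · rw [mem_domain_iff, T.coe_shift lam hf, tsum_mul_enorm_Lam_sq] at hSf
    refine lp.ext <| funext fun u => by_contra fun hu => hSf <| top_le_iff.1 ?_
    refine le_trans ?_ (ENNReal.le_tsum u)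
    rw [hinf u, ENNReal.top_mul (by simpa using hu)]
  · rintro rfl
    refine ⟨T.zero_mem_domain lam, ?_⟩
    rw [shift_zero]
    exact T.zero_mem_domain lam

def adjLam (g : V → ℂ) (u : V) : ℂ :=
  ∑' v : T.chi u, starRingEnd ℂ (lam v) * g v

theorem inner_shift_eq_tsum {f : lp (fun _ : V => ℂ) 2} (hf : f ∈ T.domain lam)
    (g : lp (fun _ : V => ℂ) 2) :
    inner ℂ (T.shift lam f) g = ∑' u, starRingEnd ℂ (f u) * T.adjLam lam g u := by
  have hvan : ∀ v, ¬T.HasParent v → inner ℂ (T.shift lam f v) (g v) = 0 := fun v hv => by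
    simp [T.coe_shift lam hf, T.Lam_apply_of_not_hasParent lam hv]
  rw [lp.inner_eq_tsum, T.tsum_eq_tsum_tsum_chi_of_summable hvan
    (lp.summable_inner (T.shift lam f) g)]
  refine tsum_congr fun u => ?_
  rw [adjLam, ← tsum_mul_left]
  refine tsum_congr fun v => ?_
  simp [T.coe_shift lam hf, T.Lam_apply_of_edge lam v.2]
  ring

section Hyponormal

variable {T lam} (hpos : ∀ v, T.zeta lam v ≠ 0) (hfin : ∀ v, T.zeta lam v ≠ ⊤)
  (hle : ∀ u, ∑' v : T.chi u, ‖lam v‖ₑ ^ 2 / T.zeta lam v ^ 2 ≤ 1)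
include hpos hfin hle

theorem enorm_adjLam_sq_le (g : V → ℂ) (u : V) :
    ‖T.adjLam lam g u‖ₑ ^ 2 ≤ ∑' v : T.chi u, T.zeta lam v ^ 2 * ‖g v‖ₑ ^ 2 := by
  let z : V → ℝ≥0 := fun v => (T.zeta lam v ^ 2).toNNReal
  have hz : ∀ v, (z v : ℝ≥0∞) = T.zeta lam v ^ 2 :=
    fun v => ENNReal.coe_toNNReal (ENNReal.pow_ne_top (hfin v))
  have hz0 : ∀ v, z v ≠ 0 := fun v => by
    simpa [← ENNReal.coe_ne_zero, hz] using hpos v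
  calc ‖T.adjLam lam g u‖ₑ ^ 2
      ≤ (∑' v : T.chi u, ((‖lam v‖₊ * ‖g v‖₊ : ℝ≥0) : ℝ≥0∞)) ^ 2 := by
        gcongr
        exact enorm_tsum_le_tsum_enorm.trans_eq (tsum_congr fun v => by simp [enorm_eq_nnnorm])
    _ ≤ (∑' v : T.chi u, ((‖lam v‖₊ ^ 2 / z v : ℝ≥0) : ℝ≥0∞)) *
          ∑' v : T.chi u, ((z v * ‖g v‖₊ ^ 2 : ℝ≥0) : ℝ≥0∞) :=
        ENNReal.tsum_coe_sq_le_tsum_mul_tsum_of_sq_le_mul fun v => by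
          field_simp [hz0 v]
          rfl
    _ ≤ 1 * ∑' v : T.chi u, T.zeta lam v ^ 2 * ‖g v‖ₑ ^ 2 := by
        gcongr
        · simpa [ENNReal.coe_div (hz0 _), hz, enorm_eq_nnnorm] using hle u
        · simp [hz, enorm_eq_nnnorm]
    _ = _ := one_mul _

theorem tsum_enorm_adjLam_sq_le {g : lp (fun _ : V => ℂ) 2} (hg : g ∈ T.domain lam) :
    ∑' u, ‖T.adjLam lam g u‖ₑ ^ 2 ≤ ‖T.shift lam g‖ₑ ^ 2 :=
  calc ∑' u, ‖T.adjLam lam g u‖ₑ ^ 2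
      ≤ ∑' u, ∑' v : T.chi u, T.zeta lam v ^ 2 * ‖g v‖ₑ ^ 2 :=
        ENNReal.tsum_le_tsum (enorm_adjLam_sq_le hpos hfin hle g)
    _ ≤ ∑' v, T.zeta lam v ^ 2 * ‖g v‖ₑ ^ 2 := T.tsum_tsum_chi_le _
    _ = ‖T.shift lam g‖ₑ ^ 2 := (T.enorm_shift_sq lam hg).symm

theorem exists_adjoint_norm_le_norm_shift {g : lp (fun _ : V => ℂ) 2} (hg : g ∈ T.domain lam) :
    ∃ a : lp (fun _ : V => ℂ) 2, ‖a‖ ≤ ‖T.shift lam g‖ ∧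
      ∀ f ∈ T.domain lam, inner ℂ (T.shift lam f) g = inner ℂ f a := by
  have hbound := tsum_enorm_adjLam_sq_le hpos hfin hle hg
  have hmem : Memℓp (T.adjLam lam g) 2 := memℓp_two_iff_tsum_enorm_sq_ne_top.2 <|
    ne_top_of_le_ne_top (ENNReal.pow_ne_top enorm_ne_top) hbound
  refine ⟨⟨_, hmem⟩, ?_, fun f hf => ?_⟩
  · rw [← enorm_le_iff_norm_le, ← ENNReal.pow_le_pow_left_iff two_ne_zero,
      lp.enorm_sq_eq_tsum]
    exact hbound
  · rw [T.inner_shift_eq_tsum lam hf, lp.inner_eq_tsum]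
    simp [mul_comm]

theorem isHyponormal_of_tsum_div_zeta_sq_le_one : T.IsHyponormal lam := by
  have hdense := T.dense_domain lam hfin
  refine ⟨hdense, fun g hg => ?_, fun f hf h hh => ?_⟩
  · obtain ⟨a, -, ha⟩ := exists_adjoint_norm_le_norm_shift hpos hfin hle hg
    exact ⟨a, ha⟩
  · obtain ⟨a, ha_norm, ha⟩ := exists_adjoint_norm_le_norm_shift hpos hfin hle hf
    rwa [hdense.eq_of_inner_right ℂ fun g hg => (hh g hg).symm.trans (ha g hg)]

end Hyponormal

variable {T}

def potentialWeight (n : V → ℕ) (P : V → ℤ) (v : V) : ℂ :=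
  ((NNReal.sqrt (2 ^ P v) * 2⁻¹ ^ (n v + 1) : ℝ≥0) : ℂ)

section PotentialWeight

variable {n : V → ℕ} {P : V → ℤ} (hn : ∀ u, Function.Bijective fun v : T.chi u => n v)
  (hP : ∀ u v, T.edge u v → P v = P u + (n v + 1))

theorem enorm_potentialWeight_sq (v : V) :
    ‖potentialWeight n P v‖ₑ ^ 2 = ((2 ^ P v * (2⁻¹ ^ (n v + 1)) ^ 2 : ℝ≥0) : ℝ≥0∞) := by
  rw [enorm_eq_nnnorm, ← ENNReal.coe_pow, ENNReal.coe_inj, potentialWeight, Complex.nnnorm_real,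
    NNReal.nnnorm_eq, mul_pow, NNReal.sq_sqrt]

theorem potentialWeight_ne_zero (v : V) : potentialWeight n P v ≠ 0 := by
  intro h0
  have h := enorm_potentialWeight_sq (n := n) (P := P) v
  rw [h0, enorm_zero, zero_pow two_ne_zero, eq_comm, ENNReal.coe_eq_zero] at h
  exact absurd h (by positivity)

include hP in
theorem two_zpow_of_edge {u v : V} (h : T.edge u v) :
    (2 : ℝ≥0) ^ P v = 2 ^ P u * 2 ^ (n v + 1) := by
  rw [hP u v h, zpow_add₀ two_ne_zero]
  norm_cast

include hP in
theorem enorm_potentialWeight_sq_of_edge {u v : V} (h : T.edge u v) :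
    ‖potentialWeight n P v‖ₑ ^ 2 = ((2 ^ P u * 2⁻¹ ^ (n v + 1) : ℝ≥0) : ℝ≥0∞) := by
  rw [enorm_potentialWeight_sq, two_zpow_of_edge hP h, ENNReal.coe_inj]
  field_simp
  simp

include hn in
theorem tsum_chi_comp_index (u : V) (F : ℕ → ℝ≥0∞) : ∑' v : T.chi u, F (n v) = ∑' k, F k :=
  (Equiv.ofBijective _ (hn u)).tsum_eq F

include hn hP

theorem zeta_potentialWeight_sq (u : V) :
    T.zeta (potentialWeight n P) u ^ 2 = ((2 ^ P u : ℝ≥0) : ℝ≥0∞) := by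
  rw [zeta_sq]
  calc ∑' v : T.chi u, ‖potentialWeight n P v‖ₑ ^ 2
      = ∑' v : T.chi u, ((2 ^ P u : ℝ≥0) : ℝ≥0∞) * 2⁻¹ ^ (n v + 1) :=
        tsum_congr fun v => by
          rw [enorm_potentialWeight_sq_of_edge hP v.2, ENNReal.coe_mul, ENNReal.coe_pow,
            ENNReal.coe_inv two_ne_zero, ENNReal.coe_ofNat]
    _ = ((2 ^ P u : ℝ≥0) : ℝ≥0∞) := by
      rw [ENNReal.tsum_mul_left, tsum_chi_comp_index hn u fun k => 2⁻¹ ^ (k + 1),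
        ENNReal.tsum_inv_two_pow_succ, mul_one]

theorem zeta_potentialWeight_ne_zero (u : V) : T.zeta (potentialWeight n P) u ≠ 0 := by
  refine fun h0 => ENNReal.coe_ne_zero.2 (zpow_ne_zero (P u) two_ne_zero) ?_
  rw [← zeta_potentialWeight_sq hn hP, h0, zero_pow two_ne_zero]

theorem zeta_potentialWeight_ne_top (u : V) : T.zeta (potentialWeight n P) u ≠ ⊤ := by
  refine fun htop => ENNReal.coe_ne_top (r := 2 ^ P u) ?_
  rw [← zeta_potentialWeight_sq hn hP, htop, ENNReal.top_pow two_ne_zero]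

theorem tsum_chi_enorm_potentialWeight_sq_div_le_one (u : V) :
    ∑' v : T.chi u, ‖potentialWeight n P v‖ₑ ^ 2 / T.zeta (potentialWeight n P) v ^ 2 ≤ 1 := by
  calc ∑' v : T.chi u, ‖potentialWeight n P v‖ₑ ^ 2 / T.zeta (potentialWeight n P) v ^ 2
      ≤ ∑' v : T.chi u, ((2⁻¹ ^ (n v + 1) : ℝ≥0) : ℝ≥0∞) := ENNReal.tsum_le_tsum fun v => by
        rw [enorm_potentialWeight_sq, zeta_potentialWeight_sq hn hP,
          ← ENNReal.coe_div (by positivity), mul_div_cancel_left₀ _ (by positivity),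
          ENNReal.coe_le_coe]
        exact pow_le_of_le_one zero_le (pow_le_one₀ zero_le (by norm_num)) two_ne_zero
    _ = 1 := by
      simp only [ENNReal.coe_pow, ENNReal.coe_inv two_ne_zero, ENNReal.coe_ofNat]
      rw [tsum_chi_comp_index hn u fun k => 2⁻¹ ^ (k + 1), ENNReal.tsum_inv_two_pow_succ]

theorem tsum_chi_zeta_sq_mul_enorm_potentialWeight_sq (u : V) :
    ∑' v : T.chi u, T.zeta (potentialWeight n P) v ^ 2 * ‖potentialWeight n P v‖ₑ ^ 2 = ⊤ := by
  have : Infinite (T.chi u) := (Equiv.ofBijective _ (hn u)).infinite_iff.2 inferInstance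
  have hconst : ∀ v : T.chi u,
      T.zeta (potentialWeight n P) v ^ 2 * ‖potentialWeight n P v‖ₑ ^ 2 =
        (((2 ^ P u) ^ 2 : ℝ≥0) : ℝ≥0∞) := fun v => by
    rw [zeta_potentialWeight_sq hn hP, enorm_potentialWeight_sq_of_edge hP v.2,
      two_zpow_of_edge hP v.2, ← ENNReal.coe_mul, ENNReal.coe_inj]
    field_simp
    simp
  rw [tsum_congr hconst]
  exact ENNReal.tsum_const_eq_top_of_ne_zero (by positivity)

end PotentialWeight

end DirectedTree

open DirectedTree

/-- Theorem 4.2: if every vertex has countably infinitely many children, then there is a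
family of nonzero weights such that `S_λ` is injective and hyponormal and
`D(S_λ²) = {0}`. -/
theorem stmt14 {V : Type} (T : DirectedTree V)
    (h : ∀ u : V, (T.chi u).Countable ∧ (T.chi u).Infinite) :
    ∃ lam : V → ℂ, (∀ v ∈ T.Vcirc, lam v ≠ 0) ∧
      Set.InjOn (T.shift lam) (T.domain lam) ∧ T.IsHyponormal lam ∧
      T.squareDomain lam = ({0} : Set (lp (fun _ : V => ℂ) 2)) := by
  obtain ⟨n, hn⟩ := T.exists_bijective_index h
  obtain ⟨P, hP⟩ := T.exists_potential fun v => (n v + 1 : ℤ)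
  refine ⟨potentialWeight n P, fun v _ => potentialWeight_ne_zero v,
    T.injOn_shift _ (fun u => (h u).2.nonempty) fun v _ => potentialWeight_ne_zero v,
    isHyponormal_of_tsum_div_zeta_sq_le_one (zeta_potentialWeight_ne_zero hn hP)
      (zeta_potentialWeight_ne_top hn hP) (tsum_chi_enorm_potentialWeight_sq_div_le_one hn hP),
    T.squareDomain_eq_singleton_zero _ (tsum_chi_zeta_sq_mul_enorm_potentialWeight_sq hn hP)⟩
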